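/- arXiv:2306.00884 — 7 statements merged into one kernel-verified Lean document; each statement's English description precedes it below -/
import Mathlib

section
/- Let D be squarefree of degree 2g+2 and (P,Q) a solution of P² - D·Q² = 1 with deg P = n > 0. Then the number of roots e of D with P(e) = 1 is congruent to n mod 2, and likewise the number of roots with P(e) = −1 is congruent to n mod 2. -/
open Polynomial

lemma pellAbel_aux (D A B Q : Polynomial ℂ) (hDsf : Squarefree D)
    (hfac : A * B = D * Q ^ 2) (hAB : A * B ≠ 0)
    (hdisj : ∀ e : ℂ, A.eval e = 0 → B.eval e ≠ 0) :
    (D.roots.toFinset.filter (fun e => A.eval e = 0)).card % 2 = A.natDegree % 2 := by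
  have hA : A ≠ 0 := left_ne_zero_of_mul hAB
  have hD : D ≠ 0 := hDsf.ne_zero
  have hDQ : D * Q ^ 2 ≠ 0 := hfac ▸ hAB
  have hQ : Q ≠ 0 := by
    intro h
    exact hDQ (by simp [h])
  have hDnodup : D.roots.Nodup :=
    nodup_roots (PerfectField.separable_iff_squarefree.mpr hDsf)
  -- key multiplicity identity
  have hkey : ∀ e : ℂ, A.eval e = 0 →
      rootMultiplicity e A = rootMultiplicity e D + 2 * rootMultiplicity e Q := by
    intro e he
    have h1 : rootMultiplicity e (A * B) = rootMultiplicity e A + rootMultiplicity e B :=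
      rootMultiplicity_mul hAB
    have hB0 : rootMultiplicity e B = 0 := rootMultiplicity_eq_zero (hdisj e he)
    have h2 : rootMultiplicity e (D * Q ^ 2)
        = rootMultiplicity e D + (rootMultiplicity e Q + rootMultiplicity e Q) := by
      rw [rootMultiplicity_mul hDQ, sq, rootMultiplicity_mul (mul_ne_zero hQ hQ)]
    have h3 : rootMultiplicity e (A * B) = rootMultiplicity e (D * Q ^ 2) := by rw [hfac]
    omega
  have hDle : ∀ e : ℂ, rootMultiplicity e D ≤ 1 := by
    intro e
    have := Multiset.nodup_iff_count_le_one.mp hDnodup e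
    rwa [count_roots] at this
  -- finset equality
  have hsetEq : A.roots.toFinset.filter (fun e => Odd (rootMultiplicity e A))
      = D.roots.toFinset.filter (fun e => A.eval e = 0) := by
    ext e
    simp only [Finset.mem_filter, Multiset.mem_toFinset, mem_roots', hA, hD, ne_eq,
      not_false_eq_true, true_and, IsRoot.def]
    constructor
    · rintro ⟨he, hodd⟩
      refine ⟨?_, he⟩
      have hk := hkey e he
      have hDpos : 0 < rootMultiplicity e D := by
        rcases Nat.eq_zero_or_pos (rootMultiplicity e D) with h0 | h
        · rw [hk, h0] at hodd
          rw [Nat.odd_iff] at hodd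
          omega
        · exact h
      exact (rootMultiplicity_pos hD).mp hDpos
    · rintro ⟨hDe, he⟩
      refine ⟨he, ?_⟩
      have hDpos : 0 < rootMultiplicity e D := (rootMultiplicity_pos hD).mpr hDe
      have hD1 : rootMultiplicity e D = 1 := le_antisymm (hDle e) hDpos
      rw [hkey e he, hD1]
      exact ⟨rootMultiplicity e Q, by ring⟩
  -- degree as sum of multiplicities
  have hdeg : A.natDegree = ∑ e ∈ A.roots.toFinset, rootMultiplicity e A := by
    have hsplit : A.roots.card = A.natDegree :=
      splits_iff_card_roots.mp (IsAlgClosed.splits A)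
    rw [← hsplit, ← Multiset.toFinset_sum_count_eq]
    exact Finset.sum_congr rfl fun e _ => by rw [count_roots]
  rw [← hsetEq, hdeg, Finset.sum_nat_mod]
  congr 1
  rw [Finset.card_filter]
  exact (Finset.sum_congr rfl fun e _ => by
    rcases Nat.even_or_odd (rootMultiplicity e A) with h | h
    · simp [Nat.even_iff.mp h, Nat.odd_iff]
    · simp [Nat.odd_iff.mp h, h]).symm

/-- Let `D` be monic squarefree of degree `2g+2` and `(P,Q)` a solution of `P² - D·Q² = 1`
with `deg P = n > 0`. Then the number of roots `e` of `D` with `P(e) = 1` is congruent to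
`n` mod 2, and likewise for the roots with `P(e) = −1`. -/
theorem pellAbel_partition_parity (g n : ℕ)
    (D P Q : Polynomial ℂ) (hDsf : Squarefree D) (hDmonic : D.Monic)
    (hDdeg : D.natDegree = 2 * g + 2)
    (hPA : P ^ 2 - D * Q ^ 2 = 1) (hn : P.natDegree = n) (hnpos : 0 < n) :
    (D.roots.toFinset.filter (fun e => P.eval e = 1)).card % 2 = n % 2 ∧
    (D.roots.toFinset.filter (fun e => P.eval e = -1)).card % 2 = n % 2 := by
  have hP2 : P ^ 2 ≠ 1 := by
    intro h
    have h2 : (P ^ 2).natDegree = 2 * n := by rw [natDegree_pow, hn]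
    rw [h] at h2
    simp at h2
    omega
  have hsub : P ^ 2 - 1 ≠ 0 := sub_ne_zero.mpr hP2
  constructor
  · have hfac : (P - 1) * (P + 1) = D * Q ^ 2 := by linear_combination hPA
    have hAB : (P - 1) * (P + 1) ≠ 0 := by
      intro h; apply hsub; linear_combination h
    have key := pellAbel_aux D (P - 1) (P + 1) Q hDsf hfac hAB (by
      intro e he
      simp only [eval_sub, eval_one, sub_eq_zero] at he
      simp [he])
    have hdeg1 : (P - 1).natDegree = n := by
      rw [show (1 : Polynomial ℂ) = C 1 by simp, natDegree_sub_C, hn]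
    have hfe : D.roots.toFinset.filter (fun e => P.eval e = 1)
        = D.roots.toFinset.filter (fun e => (P - 1).eval e = 0) :=
      Finset.filter_congr (fun e _ => by simp [sub_eq_zero])
    rw [hfe, key, hdeg1]
  · have hfac : (P + 1) * (P - 1) = D * Q ^ 2 := by linear_combination hPA
    have hAB : (P + 1) * (P - 1) ≠ 0 := by
      intro h; apply hsub; linear_combination h
    have key := pellAbel_aux D (P + 1) (P - 1) Q hDsf hfac hAB (by
      intro e he
      simp only [eval_add, eval_one] at he
      have hpe : P.eval e = -1 := by linear_combination he
      simp [hpe]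
      norm_num)
    have hdeg1 : (P + 1).natDegree = n := by
      rw [show (1 : Polynomial ℂ) = C 1 by simp, natDegree_add_C, hn]
    have hfe : D.roots.toFinset.filter (fun e => P.eval e = -1)
        = D.roots.toFinset.filter (fun e => (P + 1).eval e = 0) :=
      Finset.filter_congr (fun e _ => by
        simp only [eval_add, eval_one]
        constructor
        · intro h; rw [h]; ring
        · intro h; linear_combination h)
    rw [hfe, key, hdeg1]
end

section
/- Let D be squarefree of degree 2g+2 with g ≥ 1 and (P,Q) a solution of P² - D·Q² = 1 with deg P = n > 0. If P(e) = 1 for every root e of D (equivalently, |E⁻| = 0), then there exists a polynomial solution of the Pell–Abel equation for D of degree n/2; in particular n is even and the solution P is not primitive. -/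
/-!
Since `D` is squarefree and `P ≡ 1` at every root of `D`, we get `D ∣ P - 1`, say `P - 1 = D A`.
Then `A (P + 1) = Q²` with `A` and `P + 1` coprime, so over `ℂ` both are squares, `P + 1 = U²` and
`A = V²`. Subtracting, `U² - D V² = 2`, and `(U, V) / √2` is a solution of half the degree.
-/

open Polynomial

theorem isCoprime_sub_one_add_one {R : Type*} [CommRing R] (h2 : IsUnit (2 : R)) (x : R) :
    IsCoprime (x - 1) (x + 1) := by
  obtain ⟨u, hu⟩ := h2
  have hinv : (2 : R) * ↑u⁻¹ = 1 := hu ▸ u.mul_inv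
  exact ⟨-↑u⁻¹, ↑u⁻¹, by linear_combination hinv⟩

namespace Polynomial

variable {K : Type*} [Field K] [IsAlgClosed K]

theorem dvd_of_squarefree_of_forall_isRoot {D F : K[X]} (hD : Squarefree D)
    (h : ∀ x, D.IsRoot x → F.IsRoot x) : D ∣ F := by
  by_cases hF : F = 0
  · simp [hF]
  refine (IsAlgClosed.splits D).dvd_of_roots_le_roots hD.ne_zero ?_
  rw [Multiset.le_iff_subset (nodup_roots (PerfectField.separable_iff_squarefree.mpr hD))]
  intro x hx
  exact (mem_roots hF).mpr (h x ((mem_roots hD.ne_zero).mp hx))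

theorem exists_eq_sq_of_isCoprime_of_mul_eq_sq {A B Q : K[X]} (hAB : IsCoprime A B)
    (h : A * B = Q ^ 2) : ∃ R, A = R ^ 2 := by
  obtain ⟨R, u, hR⟩ := exists_associated_pow_of_mul_eq_pow' hAB h
  obtain ⟨d, -, hd⟩ := isUnit_iff.mp u.isUnit
  obtain ⟨s, rfl⟩ := IsAlgClosed.exists_pow_nat_eq d two_pos
  exact ⟨C s * R, by rw [← hR, ← hd, C_pow]; ring⟩

theorem exists_pellAbel_half_natDegree_of_dvd_sub_one (h2 : (2 : K) ≠ 0) {D P Q : K[X]}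
    (hD : D ≠ 0) (hPA : P ^ 2 - D * Q ^ 2 = 1) (hdvd : D ∣ P - 1) :
    ∃ P' Q' : K[X], P' ^ 2 - D * Q' ^ 2 = 1 ∧ 2 * P'.natDegree = P.natDegree := by
  obtain ⟨A, hA⟩ := hdvd
  have hAP : A * (P + 1) = Q ^ 2 :=
    mul_left_cancel₀ hD (by linear_combination (P + 1) * hA.symm + hPA)
  have h2' : IsUnit (2 : K[X]) := by
    rw [← C_ofNat]
    exact isUnit_C.mpr h2.isUnit
  have hcop : IsCoprime A (P + 1) :=
    (isCoprime_sub_one_add_one h2' P).of_isCoprime_of_dvd_left (Dvd.intro_left D hA.symm)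
  obtain ⟨V, rfl⟩ := exists_eq_sq_of_isCoprime_of_mul_eq_sq hcop hAP
  obtain ⟨U, hU⟩ := exists_eq_sq_of_isCoprime_of_mul_eq_sq hcop.symm ((mul_comm _ _).trans hAP)
  obtain ⟨γ, hγ⟩ := IsAlgClosed.exists_pow_nat_eq (2⁻¹ : K) two_pos
  have hγ0 : γ ≠ 0 := ne_zero_pow two_ne_zero (hγ ▸ inv_ne_zero h2)
  have hCγ : C γ ^ 2 * 2 = 1 := by
    rw [← C_pow, hγ, ← C_ofNat, ← C_mul, inv_mul_cancel₀ h2, C_1]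
  refine ⟨C γ * U, C γ * V, by linear_combination C γ ^ 2 * hA - C γ ^ 2 * hU + hCγ, ?_⟩
  rw [natDegree_C_mul hγ0, ← natDegree_pow, ← hU, ← C_1, natDegree_add_C]

end Polynomial

theorem pellAbel_all_plus_one_not_primitive_general (n : ℕ)
    (D P Q : Polynomial ℂ) (hDsf : Squarefree D)
    (hPA : P ^ 2 - D * Q ^ 2 = 1) (hn : P.natDegree = n) (hnpos : 0 < n)
    (hall : ∀ e : ℂ, D.eval e = 0 → P.eval e = 1) :
    ∃ P' Q' : Polynomial ℂ, P' ^ 2 - D * Q' ^ 2 = 1 ∧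
      2 * P'.natDegree = n ∧ 0 < P'.natDegree := by
  have hdvd : D ∣ P - 1 :=
    dvd_of_squarefree_of_forall_isRoot hDsf fun e he => by simp [hall e he]
  obtain ⟨P', Q', hsol, hdeg⟩ :=
    exists_pellAbel_half_natDegree_of_dvd_sub_one two_ne_zero hDsf.ne_zero hPA hdvd
  exact ⟨P', Q', hsol, hdeg.trans hn, by omega⟩

/-- Let `D` be monic squarefree of degree `2g+2` with `g ≥ 1` and `(P,Q)` a solution of
`P² - D·Q² = 1` with `deg P = n > 0`. If `P(e) = 1` for every root `e` of `D`, then there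
is a polynomial solution of the Pell–Abel equation for `D` of degree `n/2`; in particular
`n` is even and `P` is not primitive. -/
theorem pellAbel_all_plus_one_not_primitive (g n : ℕ) (hg : 1 ≤ g)
    (D P Q : Polynomial ℂ) (hDsf : Squarefree D) (hDmonic : D.Monic)
    (hDdeg : D.natDegree = 2 * g + 2)
    (hPA : P ^ 2 - D * Q ^ 2 = 1) (hn : P.natDegree = n) (hnpos : 0 < n)
    (hall : ∀ e : ℂ, D.eval e = 0 → P.eval e = 1) :
    ∃ P' Q' : Polynomial ℂ, P' ^ 2 - D * Q' ^ 2 = 1 ∧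
      2 * P'.natDegree = n ∧ 0 < P'.natDegree :=
  pellAbel_all_plus_one_not_primitive_general n D P Q hDsf hPA hn hnpos hall
end

section
/- For fixed squarefree D, if the Pell–Abel equation P² - D·Q² = 1 admits a nontrivial solution, and (P₀,Q₀) is a solution of minimal positive degree n, then every solution P of positive degree has degree a multiple of n. -/
open Polynomial

/-!
Solutions of `P ^ 2 - D * Q ^ 2 = 1` compose like units of `R[X][√D]`. Composing a solution
`(P, Q)` of degree `m > n` with `(P₀, ±Q₀)` gives two solutions whose first coordinates
`P * P₀ ∓ D * Q * Q₀` have product `P ^ 2 + D * Q₀ ^ 2`, of degree `2 * m`, and sum `2 * P * P₀`,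
of degree `m + n`. Neither exceeds degree `m + n`, so one of them has degree exactly `m - n`,
and strong induction on `m` finishes the proof.
-/

namespace Polynomial

variable {R : Type*} [CommRing R] {D P Q P₀ Q₀ : R[X]}

def IsPellAbelSolution (D P Q : R[X]) : Prop :=
  P ^ 2 - D * Q ^ 2 = 1

namespace IsPellAbelSolution

theorem mul_add (h : IsPellAbelSolution D P Q) (h₀ : IsPellAbelSolution D P₀ Q₀) :
    IsPellAbelSolution D (P * P₀ + D * Q * Q₀) (P * Q₀ + Q * P₀) := by
  unfold IsPellAbelSolution at *
  linear_combination (P₀ ^ 2 - D * Q₀ ^ 2) * h + h₀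

theorem mul_sub (h : IsPellAbelSolution D P Q) (h₀ : IsPellAbelSolution D P₀ Q₀) :
    IsPellAbelSolution D (P * P₀ - D * Q * Q₀) (P * Q₀ - Q * P₀) := by
  unfold IsPellAbelSolution at *
  linear_combination (P₀ ^ 2 - D * Q₀ ^ 2) * h + h₀

theorem mul_sub_mul_mul_add (h : IsPellAbelSolution D P Q) (h₀ : IsPellAbelSolution D P₀ Q₀) :
    (P * P₀ - D * Q * Q₀) * (P * P₀ + D * Q * Q₀) = P ^ 2 + D * Q₀ ^ 2 := by
  unfold IsPellAbelSolution at *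
  linear_combination P ^ 2 * h₀ + D * Q₀ ^ 2 * h

variable [IsDomain R]

theorem natDegree_mul_sq (h : IsPellAbelSolution D P Q) :
    (D * Q ^ 2).natDegree = 2 * P.natDegree := by
  have hDQ : D * Q ^ 2 = P ^ 2 - C 1 := by
    unfold IsPellAbelSolution at h
    rw [map_one]
    linear_combination -h
  rw [hDQ, natDegree_sub_C, natDegree_pow]

-- Squaring: `(D * Q * Q₀) ^ 2 = (D * Q ^ 2) * (D * Q₀ ^ 2)`.
theorem natDegree_mul_mul_le (h : IsPellAbelSolution D P Q) (h₀ : IsPellAbelSolution D P₀ Q₀) :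
    (D * Q * Q₀).natDegree ≤ P.natDegree + P₀.natDegree := by
  have hsq : 2 * (D * Q * Q₀).natDegree ≤ 2 * P.natDegree + 2 * P₀.natDegree := by
    calc 2 * (D * Q * Q₀).natDegree = ((D * Q ^ 2) * (D * Q₀ ^ 2)).natDegree := by
          rw [← natDegree_pow, mul_comm]; ring_nf
      _ ≤ (D * Q ^ 2).natDegree + (D * Q₀ ^ 2).natDegree := natDegree_mul_le
      _ = 2 * P.natDegree + 2 * P₀.natDegree := by
          rw [h.natDegree_mul_sq, h₀.natDegree_mul_sq]
  omega

theorem natDegree_mul_sub_add_natDegree_mul_add (h : IsPellAbelSolution D P Q)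
    (h₀ : IsPellAbelSolution D P₀ Q₀) (hlt : P₀.natDegree < P.natDegree) :
    (P * P₀ - D * Q * Q₀).natDegree + (P * P₀ + D * Q * Q₀).natDegree = 2 * P.natDegree := by
  have hsum : (P ^ 2 + D * Q₀ ^ 2).natDegree = 2 * P.natDegree := by
    rw [natDegree_add_eq_left_of_natDegree_lt, natDegree_pow]
    rw [natDegree_pow, h₀.natDegree_mul_sq]
    omega
  have hne : P ^ 2 + D * Q₀ ^ 2 ≠ 0 := by
    intro h0
    rw [h0, natDegree_zero] at hsum
    omega
  rw [← mul_sub_mul_mul_add h h₀] at hsum hne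
  rw [← natDegree_mul (left_ne_zero_of_mul hne) (right_ne_zero_of_mul hne), hsum]

theorem exists_natDegree_eq_sub [NeZero (2 : R)] (h : IsPellAbelSolution D P Q)
    (h₀ : IsPellAbelSolution D P₀ Q₀) (hP₀ : P₀ ≠ 0) (hlt : P₀.natDegree < P.natDegree) :
    ∃ P' Q', IsPellAbelSolution D P' Q' ∧ P'.natDegree = P.natDegree - P₀.natDegree := by
  have hPP₀ : (P * P₀).natDegree = P.natDegree + P₀.natDegree :=
    natDegree_mul (ne_zero_of_natDegree_gt hlt) hP₀
  have hDQQ₀ := natDegree_mul_mul_le h h₀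
  have hsub_le : (P * P₀ - D * Q * Q₀).natDegree ≤ P.natDegree + P₀.natDegree :=
    (natDegree_sub_le _ _).trans (max_le hPP₀.le hDQQ₀)
  have hadd_le : (P * P₀ + D * Q * Q₀).natDegree ≤ P.natDegree + P₀.natDegree :=
    (natDegree_add_le _ _).trans (max_le hPP₀.le hDQQ₀)
  have hsum := natDegree_mul_sub_add_natDegree_mul_add h h₀ hlt
  have hmax : P.natDegree + P₀.natDegree ≤
      max (P * P₀ - D * Q * Q₀).natDegree (P * P₀ + D * Q * Q₀).natDegree := by
    have htwo : P * P₀ - D * Q * Q₀ + (P * P₀ + D * Q * Q₀) = C 2 * (P * P₀) := by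
      rw [C_ofNat]; ring
    calc P.natDegree + P₀.natDegree = (C (2 : R) * (P * P₀)).natDegree := by
          rw [natDegree_C_mul two_ne_zero, hPP₀]
      _ ≤ _ := htwo ▸ natDegree_add_le _ _
  rcases le_max_iff.mp hmax with hsub | hadd
  · exact ⟨_, _, h.mul_add h₀, by omega⟩
  · exact ⟨_, _, h.mul_sub h₀, by omega⟩

end IsPellAbelSolution

end Polynomial

theorem pellAbel_degrees_multiples_of_primitive_general (n : ℕ)
    (D P₀ Q₀ : Polynomial ℂ)
    (h₀ : P₀ ^ 2 - D * Q₀ ^ 2 = 1) (hn : P₀.natDegree = n) (hnpos : 0 < n)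
    (hmin : ∀ P Q : Polynomial ℂ, P ^ 2 - D * Q ^ 2 = 1 → 0 < P.natDegree →
      n ≤ P.natDegree) :
    ∀ P Q : Polynomial ℂ, P ^ 2 - D * Q ^ 2 = 1 → 0 < P.natDegree →
      n ∣ P.natDegree := by
  have hP₀ : P₀ ≠ 0 := ne_zero_of_natDegree_gt (hn ▸ hnpos)
  suffices ∀ m, ∀ P Q : ℂ[X], P ^ 2 - D * Q ^ 2 = 1 → P.natDegree = m → 0 < m → n ∣ m from
    fun P Q h hpos => this _ P Q h rfl hpos
  intro m
  induction m using Nat.strong_induction_on with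
  | _ m ih =>
  rintro P Q h rfl hpos
  obtain heq | hlt := (hmin P Q h hpos).eq_or_lt
  · exact heq ▸ dvd_rfl
  obtain ⟨P', Q', h', hdeg⟩ := IsPellAbelSolution.exists_natDegree_eq_sub h h₀ hP₀ (hn ▸ hlt)
  have hdvd : n ∣ P.natDegree - n := ih _ (by omega) P' Q' h' (hn ▸ hdeg) (by omega)
  exact (Nat.dvd_sub_iff_left hlt.le dvd_rfl).mp hdvd

/-- If the Pell–Abel equation for a squarefree `D` of degree `2g+2`, `g ≥ 1`, admits a
nontrivial solution `(P₀,Q₀)` of minimal positive degree `n`, then every solution of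
positive degree has degree a multiple of `n`. -/
theorem pellAbel_degrees_multiples_of_primitive (g n : ℕ) (hg : 1 ≤ g)
    (D P₀ Q₀ : Polynomial ℂ) (hDsf : Squarefree D) (hDdeg : D.natDegree = 2 * g + 2)
    (h₀ : P₀ ^ 2 - D * Q₀ ^ 2 = 1) (hn : P₀.natDegree = n) (hnpos : 0 < n)
    (hmin : ∀ P Q : Polynomial ℂ, P ^ 2 - D * Q ^ 2 = 1 → 0 < P.natDegree →
      n ≤ P.natDegree) :
    ∀ P Q : Polynomial ℂ, P ^ 2 - D * Q ^ 2 = 1 → 0 < P.natDegree →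
      n ∣ P.natDegree :=
  pellAbel_degrees_multiples_of_primitive_general n D P₀ Q₀ h₀ hn hnpos hmin
end

section
/- If (P,Q) is a nontrivial solution of P² - D·Q² = 1 with D squarefree, then P and D·Q are coprime, and the roots of D are exactly the points where P takes value 1 or −1 with odd multiplicity. -/
open Polynomial

/-- If `(P,Q)` is a nontrivial solution of `P² - D·Q² = 1` with `D` monic squarefree of
degree `2g+2`, then `P` and `D·Q` are coprime, and the roots of `D` are exactly the points
where `P` takes value `1` or `−1` with odd multiplicity. -/
theorem pellAbel_coprime_and_roots (g : ℕ) (D P Q : Polynomial ℂ)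
    (hDsf : Squarefree D) (hDmonic : D.Monic) (hDdeg : D.natDegree = 2 * g + 2)
    (hPA : P ^ 2 - D * Q ^ 2 = 1) (hP : 0 < P.natDegree) :
    IsCoprime P (D * Q) ∧
    (∀ e : ℂ, D.eval e = 0 ↔
      (Odd ((P - 1).rootMultiplicity e) ∨ Odd ((P + 1).rootMultiplicity e))) := by
  have hD0 : D ≠ 0 := hDmonic.ne_zero
  have hP1 : P - 1 ≠ 0 := by
    intro h
    rw [sub_eq_zero] at h
    simp [h] at hP
  have hP2 : P + 1 ≠ 0 := by
    intro h
    have hp : P = -1 := by linear_combination h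
    simp [hp] at hP
  have hQ0 : Q ≠ 0 := by
    intro h
    have h1 : P ^ 2 = 1 := by rw [h] at hPA; linear_combination hPA
    have := congrArg natDegree h1
    simp [natDegree_pow] at this
    omega
  have key : (P - 1) * (P + 1) = D * (Q * Q) := by ring_nf; linear_combination hPA
  have hsum : ∀ e : ℂ, rootMultiplicity e (P - 1) + rootMultiplicity e (P + 1)
      = rootMultiplicity e D + (rootMultiplicity e Q + rootMultiplicity e Q) := by
    intro e
    rw [← rootMultiplicity_mul (mul_ne_zero hP1 hP2), key,
      rootMultiplicity_mul (mul_ne_zero hD0 (mul_ne_zero hQ0 hQ0)),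
      rootMultiplicity_mul (mul_ne_zero hQ0 hQ0)]
  have hDle : ∀ e : ℂ, rootMultiplicity e D ≤ 1 := by
    intro e
    by_contra h
    push_neg at h
    have h2 : (X - C e) ^ 2 ∣ D := (le_rootMultiplicity_iff hD0).mp h
    have := hDsf (X - C e) (by rwa [← sq])
    exact Polynomial.not_isUnit_X_sub_C e this
  have hnot : ∀ e : ℂ, ¬(0 < rootMultiplicity e (P - 1) ∧ 0 < rootMultiplicity e (P + 1)) := by
    rintro e ⟨h1, h2⟩
    have e1 : (P - 1).IsRoot e := (rootMultiplicity_pos hP1).mp h1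
    have e2 : (P + 1).IsRoot e := (rootMultiplicity_pos hP2).mp h2
    simp only [IsRoot, eval_sub, eval_add, eval_one, sub_eq_zero] at e1
    simp only [IsRoot, eval_add, eval_one] at e2
    rw [e1] at e2
    norm_num at e2
  constructor
  · exact ⟨P, -Q, by linear_combination hPA⟩
  · intro e
    constructor
    · intro he
      have hD1 : rootMultiplicity e D = 1 :=
        le_antisymm (hDle e) ((rootMultiplicity_pos hD0).mpr he)
      have hs := hsum e
      rw [hD1] at hs
      rcases Nat.eq_zero_or_pos (rootMultiplicity e (P - 1)) with h0 | hpos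
      · right
        exact ⟨rootMultiplicity e Q, by omega⟩
      · left
        have h2 : rootMultiplicity e (P + 1) = 0 := by
          by_contra hne
          exact hnot e ⟨hpos, Nat.pos_of_ne_zero hne⟩
        exact ⟨rootMultiplicity e Q, by omega⟩
    · intro h
      have hs := hsum e
      have hDodd : Odd (rootMultiplicity e D) := by
        rcases h with h | h
        · have hz : rootMultiplicity e (P + 1) = 0 := by
            by_contra hne
            exact hnot e ⟨h.pos, Nat.pos_of_ne_zero hne⟩
          obtain ⟨k, hk⟩ := h
          exact ⟨k - rootMultiplicity e Q, by omega⟩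
        · have hz : rootMultiplicity e (P - 1) = 0 := by
            by_contra hne
            exact hnot e ⟨Nat.pos_of_ne_zero hne, h.pos⟩
          obtain ⟨k, hk⟩ := h
          exact ⟨k - rootMultiplicity e Q, by omega⟩
      exact (rootMultiplicity_pos hD0).mp hDodd.pos
end

section
/- Let (P,Q) be a nontrivial solution of P² - D·Q² = 1, D squarefree of degree 2g+2, n = deg P. Then P² − 1 = D·Q², and Q divides the derivative P'. -/
open Polynomial

/-- Let `(P,Q)` be a nontrivial solution of `P² − D·Q² = 1`, `D` squarefree of degree
`2g+2`. Then `P² − 1 = D·Q²` and `Q` divides the derivative `P'`. -/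
theorem pellAbel_Q_divides_derivative (g : ℕ) (D P Q : Polynomial ℂ)
    (hDsf : Squarefree D) (hDdeg : D.natDegree = 2 * g + 2)
    (hPA : P ^ 2 - D * Q ^ 2 = 1) (hP : 0 < P.natDegree) :
    P ^ 2 - 1 = D * Q ^ 2 ∧ Q ∣ derivative P := by
  have h1 : P ^ 2 - 1 = D * Q ^ 2 := by linear_combination hPA
  refine ⟨h1, ?_⟩
  have hcop : IsCoprime Q P := ⟨-(D * Q), P, by linear_combination hPA⟩
  have hd : derivative (P ^ 2 - 1) = derivative (D * Q ^ 2) := by rw [h1]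
  have hd2 : P * (2 * derivative P) = Q * (derivative D * Q + 2 * D * derivative Q) := by
    have := hd
    simp only [derivative_sub, derivative_pow, derivative_one, derivative_mul,
      Nat.cast_ofNat, map_ofNat] at this
    linear_combination this
  have hQdvd : Q ∣ 2 * derivative P :=
    hcop.dvd_of_dvd_mul_left ⟨derivative D * Q + 2 * D * derivative Q, hd2⟩
  have h2 : IsUnit (2 : Polynomial ℂ) := by
    rw [← map_ofNat (C : ℂ →+* Polynomial ℂ) 2]
    exact isUnit_C.mpr (by norm_num)
  exact (h2.dvd_mul_left).mp hQdvd
end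

section
/- In the group Br_{2g+2} acting on (ℤ/2ℤ)^{2g+2} via permuting the generators v_1,…,v_{2g+2} (the reduced Burau representation at t = −1 reduced mod 2), the image of the braid group in SL_{2g+1}(ℤ/2ℤ) is isomorphic to the symmetric group S_{2g+2}. -/
/-!
The braid group acts through the symmetric group: `β_r` permutes `v_r, v_{r+1}` and the basic
cycles `C_i = v_i + v_{i+1}` form a basis of the even-weight subspace of `𝔽₂^{N+1}`, so the
matrices of the statement are those of the permutation representation on that subspace, restricted
to adjacent transpositions. That representation is faithful once `N + 1 ≥ 3`, and adjacent
transpositions generate the symmetric group.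
-/

open Matrix Finset

theorem Fin.sum_filter_le_castSucc_succ_sub {G : Type*} [AddCommGroup G] {N : ℕ}
    (h : Fin (N + 1) → G) (a : Fin (N + 1)) :
    ∑ k : Fin N with a ≤ k.castSucc, (h k.succ - h k.castSucc) = h (Fin.last N) - h a := by
  set f : ℕ → G := fun t => h (Fin.clamp t N)
  have f_val : ∀ x : Fin (N + 1), f x = h x := fun x =>
    congrArg h (Fin.ext (by simp [Fin.clamp]; omega))
  calc ∑ k : Fin N with a ≤ k.castSucc, (h k.succ - h k.castSucc)
      = ∑ k : Fin N, (fun t => if a.val ≤ t then f (t + 1) - f t else 0) k.val := by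
        rw [sum_filter]
        refine sum_congr rfl fun k _ => ?_
        have succ_eq : f (k.val + 1) = h k.succ := f_val k.succ
        have castSucc_eq : f k.val = h k.castSucc := f_val k.castSucc
        simp only [succ_eq, castSucc_eq, Fin.le_def, Fin.val_castSucc]
    _ = ∑ t ∈ range N, if a.val ≤ t then f (t + 1) - f t else 0 :=
        Fin.sum_univ_eq_sum_range (fun t => if a.val ≤ t then f (t + 1) - f t else 0) N
    _ = ∑ t ∈ Ico a.val N, (f (t + 1) - f t) := by
        rw [← sum_filter]
        congr 1
        ext t
        simp only [mem_filter, mem_range, mem_Ico]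
        omega
    _ = f N - f a := sum_Ico_sub f a.is_le
    _ = h (Fin.last N) - h a := congrArg₂ (· - ·) (f_val (Fin.last N)) (f_val a)

theorem MonoidHom.range_eq_closure_swap_castSucc_succ {G : Type*} [Group G] {N : ℕ}
    (f : Equiv.Perm (Fin (N + 1)) →* G) :
    f.range = Subgroup.closure (Set.range fun i : Fin N => f (Equiv.swap i.castSucc i.succ)) := by
  rw [f.range_eq_map, ← Subgroup.closure_eq_top_of_mclosure_eq_top
    (Equiv.Perm.mclosure_swap_castSucc_succ N), MonoidHom.map_closure, ← Set.range_comp]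
  rfl

namespace Burau

variable {N : ℕ}

/-- The coordinates of `v_a + v_N` in the basis `C_j = v_j + v_{j+1}`, `j < N`; so `v_a + v_b` has
coordinates `step a + step b`. -/
def step (a : Fin (N + 1)) (j : Fin N) : ZMod 2 := if a ≤ j.castSucc then 1 else 0

def matrix (σ : Equiv.Perm (Fin (N + 1))) : Matrix (Fin N) (Fin N) (ZMod 2) :=
  of fun j i => step (σ i.castSucc) j + step (σ i.succ) j

lemma matrix_apply (σ : Equiv.Perm (Fin (N + 1))) (j i : Fin N) :
    matrix σ j i = step (σ i.castSucc) j + step (σ i.succ) j := rfl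

lemma step_last : step (Fin.last N) = 0 := by
  funext j
  simp [step, Fin.le_def]

lemma step_injective : Function.Injective (step : Fin (N + 1) → Fin N → ZMod 2) := by
  intro x y hxy
  by_contra hne
  wlog hlt : x < y generalizing x y
  · exact this hxy.symm (Ne.symm hne) ((lt_or_gt_of_ne hne).resolve_left hlt)
  have := congrFun hxy ⟨x.val, by rw [Fin.lt_def] at hlt; omega⟩
  simp only [step, Fin.le_def, Fin.val_castSucc, le_refl, if_true] at this
  rw [if_neg (by rw [Fin.lt_def] at hlt; omega)] at this
  exact one_ne_zero this

lemma sum_filter_le_matrix (σ : Equiv.Perm (Fin (N + 1))) (j : Fin N) (a : Fin (N + 1)) :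
    ∑ k : Fin N with a ≤ k.castSucc, matrix σ j k = step (σ a) j + step (σ (Fin.last N)) j := by
  calc ∑ k : Fin N with a ≤ k.castSucc, matrix σ j k
      = ∑ k : Fin N with a ≤ k.castSucc, (step (σ k.succ) j - step (σ k.castSucc) j) :=
        sum_congr rfl fun k _ => by rw [matrix_apply, CharTwo.sub_eq_add, add_comm]
    _ = step (σ a) j + step (σ (Fin.last N)) j := by
        rw [Fin.sum_filter_le_castSucc_succ_sub (fun x => step (σ x) j), CharTwo.sub_eq_add,
          add_comm]

lemma matrix_one : matrix (1 : Equiv.Perm (Fin (N + 1))) = 1 := by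
  ext j i
  simp only [matrix_apply, step, one_apply, Equiv.Perm.one_apply, Fin.le_def, Fin.ext_iff,
    Fin.val_castSucc, Fin.val_succ]
  split_ifs <;> first | omega | decide

lemma matrix_mul (σ τ : Equiv.Perm (Fin (N + 1))) : matrix (σ * τ) = matrix σ * matrix τ := by
  ext j i
  have expand : ∀ k, matrix σ j k * matrix τ k i
      = (if τ i.castSucc ≤ k.castSucc then matrix σ j k else 0)
        + (if τ i.succ ≤ k.castSucc then matrix σ j k else 0) := fun k => by
    simp only [matrix_apply τ, step, mul_add, mul_ite, mul_one, mul_zero]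
  simp only [mul_apply, expand, sum_add_distrib, ← sum_filter, sum_filter_le_matrix]
  rw [add_add_add_comm, CharTwo.add_self_eq_zero, add_zero]
  rfl

lemma det_matrix (σ : Equiv.Perm (Fin (N + 1))) : (matrix σ).det = 1 := by
  have h := congrArg det (matrix_mul σ σ⁻¹)
  rw [mul_inv_cancel, matrix_one, det_one, det_mul] at h
  have unit_eq_one : ∀ a b : ZMod 2, 1 = a * b → a = 1 := by decide
  exact unit_eq_one _ _ h

lemma eq_one_of_matrix_eq_one (hN : 2 ≤ N) {σ : Equiv.Perm (Fin (N + 1))} (h : matrix σ = 1) :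
    σ = 1 := by
  have hstep : ∀ a j, step (σ a) j + step (σ (Fin.last N)) j = step a j := by
    intro a j
    have := sum_filter_le_matrix σ j a
    rw [h, ← matrix_one, sum_filter_le_matrix] at this
    simpa [step_last] using this.symm
  have hlast : σ (Fin.last N) = Fin.last N := by
    -- Otherwise the last coordinate of `hstep` forces `σ a = N` for every `a < N`.
    by_contra hne
    have to_last : ∀ a : Fin (N + 1), a.val < N → σ a = Fin.last N := by
      intro a ha
      have := hstep a ⟨N - 1, by omega⟩
      simp only [step, Fin.le_def, Fin.val_castSucc, Fin.ext_iff, Fin.val_last] at this hne ⊢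
      split_ifs at this <;> first | omega | exact absurd this (by decide)
    have := σ.injective
      ((to_last ⟨0, by omega⟩ (by show 0 < N; omega)).trans (to_last ⟨1, by omega⟩ hN).symm)
    simp [Fin.ext_iff] at this
  refine Equiv.ext fun a => step_injective (funext fun j => ?_)
  simpa [hlast, step_last] using hstep a j

lemma matrix_swap (r : Fin N) :
    matrix (Equiv.swap r.castSucc r.succ) = fun j i =>
      if i = j then 1 else if j = r ∧ (i.val = r.val + 1 ∨ i.val + 1 = r.val) then 1 else 0 := by
  funext j i
  simp only [matrix_apply, step, Equiv.swap_apply_def, apply_ite Fin.val, Fin.le_def,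
    Fin.ext_iff, Fin.val_castSucc, Fin.val_succ]
  split_ifs <;> first | rfl | omega

variable (N) in
def hom : Equiv.Perm (Fin (N + 1)) →* SpecialLinearGroup (Fin N) (ZMod 2) :=
  MonoidHom.mk' (fun σ => ⟨matrix σ, det_matrix σ⟩) fun σ τ => Subtype.ext (matrix_mul σ τ)

lemma hom_injective (hN : 2 ≤ N) : Function.Injective (hom N) :=
  (injective_iff_map_eq_one _).2 fun _ hσ => eq_one_of_matrix_eq_one hN (congrArg Subtype.val hσ)

end Burau

/-- The group generated by the reduced Burau matrices at `t = −1`, reduced mod 2, inside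
`SL_{2g+1}(𝔽₂)`, is isomorphic to the symmetric group on `2g+2` elements. The matrix of
the elementary braid `β_r` sends the basic cycle `C_{r±1}` to `C_{r±1} + C_r` and fixes
the other basic cycles. -/
theorem burau_mod_two_image_iso_symmetricGroup (g : ℕ) (hg : 1 ≤ g) :
    let B : Fin (2 * g + 1) → Matrix (Fin (2 * g + 1)) (Fin (2 * g + 1)) (ZMod 2) :=
      fun r j i =>
        if i = j then 1
        else if j = r ∧ (i.val = r.val + 1 ∨ i.val + 1 = r.val) then 1 else 0
    let S : Set (Matrix.SpecialLinearGroup (Fin (2 * g + 1)) (ZMod 2)) :=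
      {A | ∃ r, (A : Matrix (Fin (2 * g + 1)) (Fin (2 * g + 1)) (ZMod 2)) = B r}
    Nonempty (↥(Subgroup.closure S) ≃* Equiv.Perm (Fin (2 * g + 2))) := by
  intro B S
  have generators : Set.range (fun r : Fin (2 * g + 1) =>
      Burau.hom _ (Equiv.swap r.castSucc r.succ)) = S := by
    ext A
    simp only [S, B, Set.mem_range, Set.mem_ofPred_eq, ← Burau.matrix_swap]
    exact exists_congr fun r => Subtype.ext_iff.trans eq_comm
  have range_eq : (Burau.hom (2 * g + 1)).range = Subgroup.closure S := by
    rw [MonoidHom.range_eq_closure_swap_castSucc_succ, generators]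
  exact ⟨((MonoidHom.ofInjective (Burau.hom_injective (by omega))).trans
    (MulEquiv.subgroupCongr range_eq)).symm⟩
end

section
/- For g ≥ 1, n ≥ g+1, set m = min(g, n−g−1). The number of unordered pairs (a,b) of positive integers with a+b = 2g+2, a ≤ n, b ≤ n, and a ≡ b ≡ n (mod 2) equals ⌊m/2⌋+1 if n+g is odd and ⌊(m+1)/2⌋ if n+g is even. -/
lemma cnt_parity (r : ℕ) (hr : r < 2) :
    ∀ x, ((Finset.Icc 1 x).filter (fun a => a % 2 = r)).card = (x + r) / 2 := by
  intro x
  induction x with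
  | zero => simp; omega
  | succ k ih =>
    rw [show Finset.Icc 1 (k + 1) = insert (k + 1) (Finset.Icc 1 k) by
        ext a; simp [Finset.mem_Icc]; omega,
      Finset.filter_insert]
    by_cases h : (k + 1) % 2 = r
    · rw [if_pos h, Finset.card_insert_of_notMem (by simp [Finset.mem_Icc]), ih]
      omega
    · rw [if_neg h, ih]; omega

lemma cnt_parity' (r l x : ℕ) (hr : r < 2) (hl : 1 ≤ l) :
    ((Finset.Icc l x).filter (fun a => a % 2 = r)).card = (x + r) / 2 - (l - 1 + r) / 2 := by
  by_cases h : l ≤ x + 1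
  · have hsplit : Finset.Icc 1 x = Finset.Icc 1 (l - 1) ∪ Finset.Icc l x := by
      ext a; simp [Finset.mem_Icc]; omega
    have hdisj : Disjoint ((Finset.Icc 1 (l - 1)).filter (fun a => a % 2 = r))
        ((Finset.Icc l x).filter (fun a => a % 2 = r)) := by
      rw [Finset.disjoint_left]
      intro a ha hb
      simp [Finset.mem_Icc, Finset.mem_filter] at ha hb
      omega
    have h1 := cnt_parity r hr x
    rw [hsplit, Finset.filter_union, Finset.card_union_of_disjoint hdisj,
      cnt_parity r hr (l - 1)] at h1
    omega
  · rw [Finset.Icc_eq_empty (by omega)]; simp; omega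

/-- For `g ≥ 1`, `n ≥ g+1`, `m = min g (n−g−1)`, the number of unordered pairs `(a,b)` of
positive integers with `a + b = 2g+2`, `a, b ≤ n` and `a ≡ b ≡ n (mod 2)` equals
`⌊m/2⌋ + 1` if `n+g` is odd and `⌊(m+1)/2⌋` if `n+g` is even. -/
theorem degree_partition_count (g n : ℕ) (hg : 1 ≤ g) (hn : g + 1 ≤ n) :
    ((Finset.Icc 1 n ×ˢ Finset.Icc 1 n).filter
        (fun p : ℕ × ℕ => p.1 ≤ p.2 ∧ p.1 + p.2 = 2 * g + 2 ∧
          p.1 % 2 = n % 2 ∧ p.2 % 2 = n % 2)).card =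
      if (n + g) % 2 = 1 then min g (n - g - 1) / 2 + 1
      else (min g (n - g - 1) + 1) / 2 := by
  set l := max 1 (2 * g + 2 - n) with hl
  have himg : ((Finset.Icc 1 n ×ˢ Finset.Icc 1 n).filter
        (fun p : ℕ × ℕ => p.1 ≤ p.2 ∧ p.1 + p.2 = 2 * g + 2 ∧
          p.1 % 2 = n % 2 ∧ p.2 % 2 = n % 2)) =
      ((Finset.Icc l (g + 1)).filter (fun a => a % 2 = n % 2)).image
        (fun a => (a, 2 * g + 2 - a)) := by
    ext ⟨x, y⟩
    simp only [Finset.mem_filter, Finset.mem_product, Finset.mem_image, Finset.mem_Icc,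
      Prod.mk.injEq]
    constructor
    · rintro ⟨⟨⟨hx1, hxn⟩, ⟨hy1, hyn⟩⟩, hxy, hsum, hpx, hpy⟩
      exact ⟨x, ⟨⟨by omega, by omega⟩, hpx⟩, rfl, by omega⟩
    · rintro ⟨a, ⟨⟨ha1, ha2⟩, hap⟩, hax, hay⟩
      refine ⟨⟨⟨?_, ?_⟩, ?_, ?_⟩, ?_, ?_, ?_, ?_⟩ <;> omega
  rw [himg, Finset.card_image_of_injective _ (fun a b h => congrArg Prod.fst h),
    cnt_parity' (n % 2) l (g + 1) (by omega) (by omega)]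
  have h1 : l = max 1 (2 * g + 2 - n) := hl
  rw [Nat.max_def] at h1
  rw [Nat.min_def]
  split_ifs at h1 ⊢ <;> omega
end
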